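/- arXiv:1404.0760 — 3 statements merged into one kernel-verified Lean document; each statement's English description precedes it below -/
import Mathlib

section
/- Massey's conservation law: for finite random sequences x^n and y^n, I(x^n; y^n) = I(x^n → y^n) + I(0*y^{n-1} → x^n), where 0*y^{n-1} denotes the sequence (∅, y_1, ..., y_{n-1}) obtained by prefixing a constant; equivalently I(x^n; y^n) = Σ_{i=1}^n I(x^i; y_i | y^{i-1}) + Σ_{i=1}^n I(y^{i-1}; x_i | x^{i-1}). -/
open scoped BigOperators

/-- Distribution of a finite-valued random variable `X` under pmf `p`. -/
noncomputable def rvDist {Ω A : Type*} [Fintype Ω] [Fintype A] [DecidableEq A]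
    (p : Ω → ℝ) (X : Ω → A) (a : A) : ℝ := ∑ ω, if X ω = a then p ω else 0

/-- Shannon entropy `H(X)`. -/
noncomputable def ent {Ω A : Type*} [Fintype Ω] [Fintype A] [DecidableEq A]
    (p : Ω → ℝ) (X : Ω → A) : ℝ := ∑ a, Real.negMulLog (rvDist p X a)

/-- Conditional entropy `H(X | Y) = H(X,Y) - H(Y)`. -/
noncomputable def condEnt {Ω A B : Type*} [Fintype Ω] [Fintype A] [DecidableEq A]
    [Fintype B] [DecidableEq B] (p : Ω → ℝ) (X : Ω → A) (Y : Ω → B) : ℝ :=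
  ent p (fun ω => (X ω, Y ω)) - ent p Y

/-- Mutual information `I(X;Y) = H(X)+H(Y)-H(X,Y)`. -/
noncomputable def MI {Ω A B : Type*} [Fintype Ω] [Fintype A] [DecidableEq A]
    [Fintype B] [DecidableEq B] (p : Ω → ℝ) (X : Ω → A) (Y : Ω → B) : ℝ :=
  ent p X + ent p Y - ent p (fun ω => (X ω, Y ω))

/-- Conditional mutual information `I(X;Y|Z) = H(X|Z)+H(Y|Z)-H(X,Y|Z)`. -/
noncomputable def CMI {Ω A B C : Type*} [Fintype Ω] [Fintype A] [DecidableEq A]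
    [Fintype B] [DecidableEq B] [Fintype C] [DecidableEq C]
    (p : Ω → ℝ) (X : Ω → A) (Y : Ω → B) (Z : Ω → C) : ℝ :=
  condEnt p X Z + condEnt p Y Z - condEnt p (fun ω => (X ω, Y ω)) Z

/-- The prefix `x^i = (x_1, …, x_i)` of a random sequence, as a random variable. -/
def pre {Ω A : Type*} {n : ℕ} (x : Fin n → Ω → A) (i : ℕ) (h : i ≤ n) :
    Ω → (Fin i → A) := fun ω j => x (Fin.castLE h j) ω

/-- Directed information `I(x^n → y^n) = ∑_{i=1}^n I(x^i; y_i | y^{i-1})`. -/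
noncomputable def DI {Ω A B : Type*} [Fintype Ω] [Fintype A] [DecidableEq A]
    [Fintype B] [DecidableEq B] {n : ℕ}
    (p : Ω → ℝ) (x : Fin n → Ω → A) (y : Fin n → Ω → B) : ℝ :=
  ∑ i : Fin n, CMI p (pre x (i.1+1) i.isLt) (y i) (pre y i.1 i.isLt.le)

lemma ent_comp_inj {Ω A B : Type*} [Fintype Ω] [Fintype A] [DecidableEq A]
    [Fintype B] [DecidableEq B] (p : Ω → ℝ) (X : Ω → A) (f : A → B)
    (hf : Function.Injective f) :
    ent p (fun ω => f (X ω)) = ent p X := by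
  classical
  unfold ent
  have h1 : ∀ a, rvDist p (fun ω => f (X ω)) (f a) = rvDist p X a := by
    intro a; unfold rvDist
    exact Finset.sum_congr rfl fun ω _ => by simp [hf.eq_iff]
  have h2 : ∀ b ∈ Finset.univ \ Finset.univ.image f,
      Real.negMulLog (rvDist p (fun ω => f (X ω)) b) = 0 := by
    intro b hb
    simp only [Finset.mem_sdiff, Finset.mem_image] at hb
    have : rvDist p (fun ω => f (X ω)) b = 0 := by
      unfold rvDist
      refine Finset.sum_eq_zero fun ω _ => ?_
      rw [if_neg]
      intro h; exact hb.2 ⟨X ω, Finset.mem_univ _, h⟩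
    simp [this]
  rw [← Finset.sum_subset (Finset.subset_univ (Finset.univ.image f))
    (fun b _ hb => h2 b (Finset.mem_sdiff.mpr ⟨Finset.mem_univ _, hb⟩)),
    Finset.sum_image (fun a _ a' _ h => hf h)]
  exact Finset.sum_congr rfl fun a _ => by rw [h1]

lemma ent_subsingleton {Ω A : Type*} [Fintype Ω] [Fintype A] [DecidableEq A]
    [Subsingleton A] (p : Ω → ℝ) (hp1 : ∑ ω, p ω = 1) (X : Ω → A) : ent p X = 0 := by
  rcases isEmpty_or_nonempty A with h | h
  · simp [ent]
  · unfold ent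
    refine Finset.sum_eq_zero fun a _ => ?_
    have : rvDist p X a = 1 := by
      unfold rvDist
      rw [Finset.sum_congr rfl fun ω _ => if_pos (Subsingleton.elim _ _)]
      exact hp1
    simp [this]

lemma snoc_inj {C : Type*} {m : ℕ} {u v : Fin m → C} {a b : C}
    (h : (Fin.snoc u a : Fin (m+1) → C) = Fin.snoc v b) : u = v ∧ a = b := by
  constructor
  · funext j; have := congrFun h (Fin.castSucc j); simpa using this
  · have := congrFun h (Fin.last m); simpa using this

lemma pre_succ {Ω A : Type*} {n : ℕ} (x : Fin n → Ω → A) (i : Fin n) (ω : Ω) :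
    pre x (i.1+1) i.isLt ω = Fin.snoc (pre x i.1 i.isLt.le ω) (x i ω) := by
  funext j
  refine Fin.lastCases ?_ ?_ j
  · rw [Fin.snoc_last]
    show x (Fin.castLE _ (Fin.last i.1)) ω = x i ω
    rfl
  · intro k
    rw [Fin.snoc_castSucc]
    show x (Fin.castLE _ (Fin.castSucc k)) ω = x (Fin.castLE _ k) ω
    rfl

noncomputable def preEnt {Ω A : Type*} [Fintype Ω] [Fintype A] [DecidableEq A] {n : ℕ}
    (p : Ω → ℝ) (x : Fin n → Ω → A) (i : ℕ) : ℝ :=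
  if h : i ≤ n then ent p (pre x i h) else 0

noncomputable def preEnt2 {Ω A B : Type*} [Fintype Ω] [Fintype A] [DecidableEq A]
    [Fintype B] [DecidableEq B] {n : ℕ}
    (p : Ω → ℝ) (x : Fin n → Ω → A) (y : Fin n → Ω → B) (i : ℕ) : ℝ :=
  if h : i ≤ n then ent p (fun ω => (pre x i h ω, pre y i h ω)) else 0

lemma preEnt_of_le {Ω A : Type*} [Fintype Ω] [Fintype A] [DecidableEq A] {n : ℕ}
    (p : Ω → ℝ) (x : Fin n → Ω → A) {i : ℕ} (h : i ≤ n) :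
    preEnt p x i = ent p (pre x i h) := dif_pos h

lemma preEnt2_of_le {Ω A B : Type*} [Fintype Ω] [Fintype A] [DecidableEq A]
    [Fintype B] [DecidableEq B] {n : ℕ}
    (p : Ω → ℝ) (x : Fin n → Ω → A) (y : Fin n → Ω → B) {i : ℕ} (h : i ≤ n) :
    preEnt2 p x y i = ent p (fun ω => (pre x i h ω, pre y i h ω)) := dif_pos h

lemma massey_step {Ω A B : Type*} [Fintype Ω] [Fintype A] [DecidableEq A]
    [Fintype B] [DecidableEq B] {n : ℕ} (p : Ω → ℝ)
    (x : Fin n → Ω → A) (y : Fin n → Ω → B) (i : Fin n) :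
    CMI p (pre x (i.1+1) i.isLt) (y i) (pre y i.1 i.isLt.le)
      + CMI p (pre y i.1 i.isLt.le) (x i) (pre x i.1 i.isLt.le)
    = (preEnt p x (i.1+1) + preEnt p y (i.1+1) - preEnt2 p x y (i.1+1))
      - (preEnt p x i.1 + preEnt p y i.1 - preEnt2 p x y i.1) := by
  have hi1 : i.1 + 1 ≤ n := i.isLt
  have hi : i.1 ≤ n := i.isLt.le
  -- e1 : ent of (y i, Y_i) = ent of Y_{i+1}
  have e1 : ent p (fun ω => (y i ω, pre y i.1 i.isLt.le ω)) = ent p (pre y (i.1+1) i.isLt) := by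
    rw [← ent_comp_inj p (fun ω => (y i ω, pre y i.1 i.isLt.le ω))
      (fun q : B × (Fin i.1 → B) => (Fin.snoc q.2 q.1 : Fin (i.1+1) → B)) ?_]
    · congr 1; funext ω; exact (pre_succ y i ω).symm
    · rintro ⟨a, u⟩ ⟨b, v⟩ h
      obtain ⟨h1, h2⟩ := snoc_inj h
      simp_all
  -- e2 : ent of ((X_{i+1}, y i), Y_i) = ent of (X_{i+1}, Y_{i+1})
  have e2 : ent p (fun ω => ((pre x (i.1+1) i.isLt ω, y i ω), pre y i.1 i.isLt.le ω))
      = ent p (fun ω => (pre x (i.1+1) i.isLt ω, pre y (i.1+1) i.isLt ω)) := by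
    rw [← ent_comp_inj p (fun ω => ((pre x (i.1+1) i.isLt ω, y i ω), pre y i.1 i.isLt.le ω))
      (fun q : ((Fin (i.1+1) → A) × B) × (Fin i.1 → B) =>
        (q.1.1, (Fin.snoc q.2 q.1.2 : Fin (i.1+1) → B))) ?_]
    · congr 1; funext ω
      simp only [Prod.mk.injEq]
      exact ⟨trivial, (pre_succ y i ω).symm⟩
    · rintro ⟨⟨u, a⟩, v⟩ ⟨⟨u', a'⟩, v'⟩ h
      simp only [Prod.mk.injEq] at h
      obtain ⟨h1, h2⟩ := snoc_inj h.2
      simp_all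
  -- e3 : swap
  have e3 : ent p (fun ω => (pre y i.1 i.isLt.le ω, pre x i.1 i.isLt.le ω))
      = ent p (fun ω => (pre x i.1 i.isLt.le ω, pre y i.1 i.isLt.le ω)) := by
    have := ent_comp_inj p (fun ω => (pre x i.1 i.isLt.le ω, pre y i.1 i.isLt.le ω))
      Prod.swap Prod.swap_injective
    simpa using this
  -- e4 : ent of (x i, X_i) = ent of X_{i+1}
  have e4 : ent p (fun ω => (x i ω, pre x i.1 i.isLt.le ω)) = ent p (pre x (i.1+1) i.isLt) := by
    rw [← ent_comp_inj p (fun ω => (x i ω, pre x i.1 i.isLt.le ω))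
      (fun q : A × (Fin i.1 → A) => (Fin.snoc q.2 q.1 : Fin (i.1+1) → A)) ?_]
    · congr 1; funext ω; exact (pre_succ x i ω).symm
    · rintro ⟨a, u⟩ ⟨b, v⟩ h
      obtain ⟨h1, h2⟩ := snoc_inj h
      simp_all
  -- e5 : ent of ((Y_i, x i), X_i) = ent of (X_{i+1}, Y_i)
  have e5 : ent p (fun ω => ((pre y i.1 i.isLt.le ω, x i ω), pre x i.1 i.isLt.le ω))
      = ent p (fun ω => (pre x (i.1+1) i.isLt ω, pre y i.1 i.isLt.le ω)) := by
    rw [← ent_comp_inj p (fun ω => ((pre y i.1 i.isLt.le ω, x i ω), pre x i.1 i.isLt.le ω))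
      (fun q : ((Fin i.1 → B) × A) × (Fin i.1 → A) =>
        ((Fin.snoc q.2 q.1.2 : Fin (i.1+1) → A), q.1.1)) ?_]
    · congr 1; funext ω
      simp only [Prod.mk.injEq]
      exact ⟨(pre_succ x i ω).symm, trivial⟩
    · rintro ⟨⟨v, a⟩, u⟩ ⟨⟨v', a'⟩, u'⟩ h
      simp only [Prod.mk.injEq] at h
      obtain ⟨h1, h2⟩ := snoc_inj h.1
      simp_all
  rw [preEnt_of_le p x hi1, preEnt_of_le p x hi, preEnt_of_le p y hi1, preEnt_of_le p y hi,
    preEnt2_of_le p x y hi1, preEnt2_of_le p x y hi]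
  simp only [CMI, condEnt]
  rw [e1, e2, e3, e4, e5]
  ring


/-- Massey's conservation law
`I(x^n;y^n) = ∑ I(x^i;y_i|y^{i-1}) + ∑ I(y^{i-1}; x_i | x^{i-1})`. -/
theorem massey_conservation {Ω A B : Type*} [Fintype Ω] [Fintype A] [DecidableEq A]
    [Fintype B] [DecidableEq B] {n : ℕ} (p : Ω → ℝ)
    (hp : ∀ ω, 0 ≤ p ω) (hp1 : ∑ ω, p ω = 1)
    (x : Fin n → Ω → A) (y : Fin n → Ω → B) :
    MI p (fun ω i => x i ω) (fun ω i => y i ω) =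
      DI p x y + ∑ i : Fin n, CMI p (pre y i.1 i.isLt.le) (x i) (pre x i.1 i.isLt.le) := by
  classical
  have key : DI p x y + ∑ i : Fin n, CMI p (pre y i.1 i.isLt.le) (x i) (pre x i.1 i.isLt.le)
      = ∑ i : Fin n,
        ((preEnt p x (i.1+1) + preEnt p y (i.1+1) - preEnt2 p x y (i.1+1))
          - (preEnt p x i.1 + preEnt p y i.1 - preEnt2 p x y i.1)) := by
    rw [DI, ← Finset.sum_add_distrib]
    exact Finset.sum_congr rfl fun i _ => massey_step p x y i
  rw [key,
    Fin.sum_univ_eq_sum_range (fun k =>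
      (preEnt p x (k+1) + preEnt p y (k+1) - preEnt2 p x y (k+1))
        - (preEnt p x k + preEnt p y k - preEnt2 p x y k)) n,
    Finset.sum_range_sub (fun k => preEnt p x k + preEnt p y k - preEnt2 p x y k) n]
  have h0x : preEnt p x 0 = 0 := by
    rw [preEnt_of_le p x (Nat.zero_le n)]
    exact ent_subsingleton p hp1 _
  have h0y : preEnt p y 0 = 0 := by
    rw [preEnt_of_le p y (Nat.zero_le n)]
    exact ent_subsingleton p hp1 _
  have h02 : preEnt2 p x y 0 = 0 := by
    rw [preEnt2_of_le p x y (Nat.zero_le n)]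
    exact ent_subsingleton p hp1 _
  have hprex : pre x n le_rfl = fun ω i => x i ω := by
    funext ω j
    rfl
  have hprey : pre y n le_rfl = fun ω i => y i ω := by
    funext ω j
    rfl
  have hnx : preEnt p x n = ent p (fun ω i => x i ω) := by
    rw [preEnt_of_le p x le_rfl, hprex]
  have hny : preEnt p y n = ent p (fun ω i => y i ω) := by
    rw [preEnt_of_le p y le_rfl, hprey]
  have hn2 : preEnt2 p x y n
      = ent p (fun ω => ((fun i => x i ω), (fun i => y i ω))) := by
    rw [preEnt2_of_le p x y le_rfl, hprex, hprey]
  rw [MI, hnx, hny, hn2, h0x, h0y, h02]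
  ring
end

section
/- Lemma 1 (feedback system identity): Suppose random variables x_0, x_1,...,x_n, e_1,...,e_n satisfy: (i) for each i, x_i is a deterministic function of (x_0, e^{i-1}); (ii) for each i, the Markov chain x_0 − (e^{i-1}, x^i) − e_i holds, i.e., I(x_0; e_i | e^{i-1}, x^i) = 0. Then I(x_0; e^n) = I(x^n → e^n) = Σ_{i=1}^n I(x^i; e_i | e^{i-1}). -/
open scoped BigOperators

/-!
By the chain rule, `I(x₀; eⁿ) = ∑ᵢ I(x₀; eᵢ | e^{i-1})`. Zero conditional entropy means almost
sure functional dependence, so by (i) the whole prefix `x^i` is a function of `(x₀, e^{i-1})`.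
Hence `I(x₀; eᵢ | e^{i-1}) - I(x^i; eᵢ | e^{i-1}) = I(x₀; eᵢ | e^{i-1}, x^i)`, which vanishes
by (ii).
-/

open Function Real

def IsFunctionOf {Ω A C : Type*} (p : Ω → ℝ) (X : Ω → A) (Y : Ω → C) : Prop :=
  ∃ f : C → A, ∀ ω, p ω ≠ 0 → X ω = f (Y ω)

namespace IsFunctionOf

variable {Ω A C D : Type*} {p : Ω → ℝ} {X : Ω → A} {Y : Ω → C} {Z : Ω → D}

theorem trans (hXY : IsFunctionOf p X Y) (hYZ : IsFunctionOf p Y Z) : IsFunctionOf p X Z := by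
  obtain ⟨f, hf⟩ := hXY
  obtain ⟨g, hg⟩ := hYZ
  exact ⟨f ∘ g, fun ω hω => by rw [hf ω hω, hg ω hω, comp_apply]⟩

theorem pi {ι : Type*} {X : ι → Ω → A} (h : ∀ i, IsFunctionOf p (X i) Y) :
    IsFunctionOf p (fun ω i => X i ω) Y := by
  choose f hf using h
  exact ⟨fun c i => f i c, fun ω hω => funext fun i => hf i ω hω⟩

theorem prod_left (h : IsFunctionOf p Y Z) (X : Ω → A) :
    IsFunctionOf p (fun ω => (X ω, Y ω)) (fun ω => (X ω, Z ω)) := by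
  obtain ⟨f, hf⟩ := h
  exact ⟨fun t => (t.1, f t.2), fun ω hω => Prod.ext rfl (hf ω hω)⟩

end IsFunctionOf

section Entropy

variable {Ω A B C : Type*} [Fintype Ω] [Fintype A] [DecidableEq A] [Fintype B] [DecidableEq B]
  [Fintype C] [DecidableEq C] {p : Ω → ℝ}

theorem rvDist_congr {X Y : Ω → A} (h : ∀ ω, p ω ≠ 0 → X ω = Y ω) :
    rvDist p X = rvDist p Y := by
  funext a
  refine Finset.sum_congr rfl fun ω _ => ?_
  by_cases hω : p ω = 0
  · simp [hω]
  · rw [h ω hω]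

theorem ent_congr {X Y : Ω → A} (h : ∀ ω, p ω ≠ 0 → X ω = Y ω) : ent p X = ent p Y := by
  rw [ent, ent, rvDist_congr h]

theorem self_le_rvDist (hp : ∀ ω, 0 ≤ p ω) (X : Ω → A) (ω : Ω) : p ω ≤ rvDist p X (X ω) := by
  simpa [rvDist] using Finset.single_le_sum (f := fun ω' => if X ω' = X ω then p ω' else 0)
    (fun ω' _ => by split <;> simp [hp ω']) (Finset.mem_univ ω)

theorem ent_comp_of_injective {f : A → B} (hf : Injective f) (X : Ω → A) :
    ent p (fun ω => f (X ω)) = ent p X := by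
  refine (Fintype.sum_of_injective f hf _ _ (fun b hb => ?_) fun a => ?_).symm
  · rw [rvDist, Finset.sum_eq_zero fun ω _ => if_neg fun h => hb ⟨X ω, h⟩, negMulLog_zero]
  · simp only [rvDist, hf.eq_iff]

theorem ent_of_subsingleton [Subsingleton A] (hp1 : ∑ ω, p ω = 1) (X : Ω → A) : ent p X = 0 := by
  refine Finset.sum_eq_zero fun a _ => ?_
  rw [rvDist, Finset.sum_congr rfl fun ω _ => if_pos (Subsingleton.elim (X ω) a), hp1,
    negMulLog_one]

theorem ent_prod_comm (X : Ω → A) (Y : Ω → B) :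
    ent p (fun ω => (X ω, Y ω)) = ent p (fun ω => (Y ω, X ω)) :=
  (ent_comp_of_injective Prod.swap_injective _).symm

theorem ent_prod_eq_of_isFunctionOf {X : Ω → A} {Y : Ω → B} (h : IsFunctionOf p X Y) :
    ent p (fun ω => (X ω, Y ω)) = ent p Y := by
  obtain ⟨f, hf⟩ := h
  rw [ent_congr (Y := fun ω => (f (Y ω), Y ω)) fun ω hω => by rw [hf ω hω]]
  exact ent_comp_of_injective (f := fun c => (f c, c)) (fun _ _ h => congrArg Prod.snd h) Y

theorem ent_eq_of_isFunctionOf {X : Ω → A} {Y : Ω → B} (hXY : IsFunctionOf p X Y)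
    (hYX : IsFunctionOf p Y X) : ent p X = ent p Y := by
  rw [← ent_prod_eq_of_isFunctionOf hYX, ent_prod_comm, ent_prod_eq_of_isFunctionOf hXY]

end Entropy

section NegMulLog

variable {ι : Type*} [Fintype ι] {r : ι → ℝ}

theorem neg_mul_log_le_negMulLog {x s : ℝ} (hx : 0 ≤ x) (hxs : x ≤ s) :
    -x * log s ≤ negMulLog x := by
  rcases hx.eq_or_lt with rfl | hx
  · simp
  · rw [negMulLog, neg_mul, neg_mul, neg_le_neg_iff]
    exact mul_le_mul_of_nonneg_left (log_le_log hx hxs) hx.le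

theorem neg_mul_log_lt_negMulLog {x s : ℝ} (hx : 0 < x) (hxs : x < s) :
    -x * log s < negMulLog x := by
  rw [negMulLog, neg_mul, neg_mul, neg_lt_neg_iff]
  exact mul_lt_mul_of_pos_left (log_lt_log hx hxs) hx

theorem negMulLog_sum_eq_sum_neg_mul_log (r : ι → ℝ) :
    negMulLog (∑ i, r i) = ∑ i, -r i * log (∑ j, r j) := by
  rw [negMulLog, ← Finset.sum_mul, Finset.sum_neg_distrib]

theorem neg_mul_log_sum_le_negMulLog (hr : ∀ i, 0 ≤ r i) (i : ι) :
    -r i * log (∑ j, r j) ≤ negMulLog (r i) :=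
  neg_mul_log_le_negMulLog (hr i) (Finset.single_le_sum (fun j _ => hr j) (Finset.mem_univ i))

theorem negMulLog_sum_le (hr : ∀ i, 0 ≤ r i) : negMulLog (∑ i, r i) ≤ ∑ i, negMulLog (r i) := by
  rw [negMulLog_sum_eq_sum_neg_mul_log]
  exact Finset.sum_le_sum fun i _ => neg_mul_log_sum_le_negMulLog hr i

theorem eq_of_sum_negMulLog_le (hr : ∀ i, 0 ≤ r i)
    (h : ∑ i, negMulLog (r i) ≤ negMulLog (∑ i, r i)) {i j : ι} (hi : r i ≠ 0) (hj : r j ≠ 0) :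
    i = j := by
  by_contra hij
  have hlt : r i < ∑ k, r k := Finset.single_lt_sum (Ne.symm hij) (Finset.mem_univ i)
    (Finset.mem_univ j) ((hr j).lt_of_ne' hj) fun k _ _ => hr k
  have hstrict : negMulLog (∑ k, r k) < ∑ k, negMulLog (r k) := by
    rw [negMulLog_sum_eq_sum_neg_mul_log]
    exact Finset.sum_lt_sum (fun k _ => neg_mul_log_sum_le_negMulLog hr k)
      ⟨i, Finset.mem_univ i, neg_mul_log_lt_negMulLog ((hr i).lt_of_ne' hi) hlt⟩
  exact hstrict.not_ge h

end NegMulLog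

section CondEnt

variable {Ω A C : Type*} [Fintype Ω] [Fintype A] [DecidableEq A] [Fintype C] [DecidableEq C]
  {p : Ω → ℝ}

theorem rvDist_eq_sum_rvDist_prod (X : Ω → A) (Y : Ω → C) (c : C) :
    rvDist p Y c = ∑ a, rvDist p (fun ω => (X ω, Y ω)) (a, c) := by
  simp only [rvDist]
  rw [Finset.sum_comm]
  refine Finset.sum_congr rfl fun ω _ => ?_
  simp [Prod.ext_iff, ite_and]

theorem condEnt_eq_sum (X : Ω → A) (Y : Ω → C) :
    condEnt p X Y = ∑ c, (∑ a, negMulLog (rvDist p (fun ω => (X ω, Y ω)) (a, c))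
      - negMulLog (∑ a, rvDist p (fun ω => (X ω, Y ω)) (a, c))) := by
  rw [condEnt, ent, ent, Finset.sum_sub_distrib, Fintype.sum_prod_type, Finset.sum_comm]
  simp only [← rvDist_eq_sum_rvDist_prod]

theorem isFunctionOf_of_condEnt_eq_zero [Nonempty A] (hp : ∀ ω, 0 ≤ p ω) {X : Ω → A}
    {Y : Ω → C} (h : condEnt p X Y = 0) : IsFunctionOf p X Y := by
  set r : A → C → ℝ := fun a c => rvDist p (fun ω => (X ω, Y ω)) (a, c)
  have hr : ∀ a c, 0 ≤ r a c := fun a c =>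
    Finset.sum_nonneg fun ω _ => by split <;> simp [hp ω]
  have hgap : ∀ c, 0 ≤ ∑ a, negMulLog (r a c) - negMulLog (∑ a, r a c) := fun c =>
    sub_nonneg.2 (negMulLog_sum_le (hr · c))
  rw [condEnt_eq_sum, Finset.sum_eq_zero_iff_of_nonneg fun c _ => hgap c] at h
  refine ⟨fun c => Classical.epsilon fun a => r a c ≠ 0, fun ω hω => ?_⟩
  have hXY : r (X ω) (Y ω) ≠ 0 :=
    ((hp ω).lt_of_ne' hω |>.trans_le (self_le_rvDist hp (fun ω => (X ω, Y ω)) ω)).ne'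
  exact eq_of_sum_negMulLog_le (hr · (Y ω)) (sub_nonpos.1 (h (Y ω) (Finset.mem_univ _)).le) hXY
    (Classical.epsilon_spec (p := fun a => r a (Y ω) ≠ 0) ⟨_, hXY⟩)

end CondEnt

section MutualInformation

variable {Ω M A B C D : Type*} [Fintype Ω] [Fintype M] [DecidableEq M] [Fintype A] [DecidableEq A]
  [Fintype B] [DecidableEq B] [Fintype C] [DecidableEq C] [Fintype D] [DecidableEq D]
  {p : Ω → ℝ}

theorem condEnt_of_unique [Unique C] (hp1 : ∑ ω, p ω = 1) (X : Ω → A) (Z : Ω → C) :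
    condEnt p X Z = ent p X := by
  rw [condEnt, ent_of_subsingleton hp1 Z, sub_zero]
  exact ent_eq_of_isFunctionOf
    ⟨fun a => (a, default), fun ω _ => Prod.ext rfl (Subsingleton.elim _ _)⟩
    ⟨Prod.fst, fun _ _ => rfl⟩

theorem CMI_eq_condEnt_sub_condEnt {X : Ω → A} {Y : Ω → B} {Z : Ω → C} {V : Ω → D}
    (hV : IsFunctionOf p V (fun ω => (Y ω, Z ω))) (hYZ : IsFunctionOf p (fun ω => (Y ω, Z ω)) V) :
    CMI p X Y Z = condEnt p X Z - condEnt p X V := by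
  have hXV : ent p (fun ω => (X ω, V ω)) = ent p (fun ω => ((X ω, Y ω), Z ω)) :=
    ent_eq_of_isFunctionOf ((hV.prod_left X).trans ⟨fun t => (t.1.1, (t.1.2, t.2)), fun _ _ => rfl⟩)
      (IsFunctionOf.trans ⟨fun t => ((t.1, t.2.1), t.2.2), fun _ _ => rfl⟩ (hYZ.prod_left X))
  simp only [CMI, condEnt, hXV, ent_eq_of_isFunctionOf hV hYZ]
  ring

theorem MI_eq_sum_CMI {n : ℕ} (hp1 : ∑ ω, p ω = 1) (X : Ω → M) (e : Fin n → Ω → B) :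
    MI p X (fun ω i => e i ω) = ∑ i : Fin n, CMI p X (e i) (pre e i.1 i.isLt.le) := by
  let F : ℕ → ℝ := fun k => if h : k ≤ n then condEnt p X (pre e k h) else 0
  have hstep (i : Fin n) : CMI p X (e i) (pre e i.1 i.isLt.le) = F i - F (i + 1) := by
    simp only [F, dif_pos i.isLt.le, dif_pos (show (i : ℕ) + 1 ≤ n from i.isLt)]
    apply CMI_eq_condEnt_sub_condEnt
    · exact ⟨fun t => Fin.snoc t.2 t.1, fun _ _ => (Fin.snoc_init_self _).symm⟩
    · exact ⟨fun v => (v (Fin.last _), Fin.init v), fun _ _ => rfl⟩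
  rw [Fintype.sum_congr _ _ hstep, Fin.sum_univ_eq_sum_range (fun i => F i - F (i + 1)),
    Finset.sum_range_sub']
  simp only [F, dif_pos (Nat.zero_le n), dif_pos le_rfl, condEnt_of_unique hp1]
  rw [MI, condEnt, sub_sub_eq_add_sub]
  rfl

/-- As `W` is determined by `(X, Z)`, the difference of the two sides is
`H(Y | Z, W) - H(Y | X, Z) = H(Y | Z, W) - H(Y | X, Z, W) = I(X; Y | Z, W) = 0`. -/
theorem CMI_eq_CMI_of_markov {X : Ω → M} {Y : Ω → B} {Z : Ω → C} {W : Ω → D}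
    (hW : IsFunctionOf p W (fun ω => (X ω, Z ω))) (hm : CMI p X Y (fun ω => (Z ω, W ω)) = 0) :
    CMI p X Y Z = CMI p W Y Z := by
  obtain ⟨f, hf⟩ := hW
  have hXZW : ent p (fun ω => (X ω, (Z ω, W ω))) = ent p (fun ω => (X ω, Z ω)) :=
    ent_eq_of_isFunctionOf
      ⟨fun t => (t.1, (t.2, f t)), fun ω hω => Prod.ext rfl (Prod.ext rfl (hf ω hω))⟩
      ⟨fun t => (t.1, t.2.1), fun _ _ => rfl⟩
  have hXYZW : ent p (fun ω => ((X ω, Y ω), (Z ω, W ω))) = ent p (fun ω => ((X ω, Y ω), Z ω)) :=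
    ent_eq_of_isFunctionOf
      ⟨fun t => (t.1, (t.2, f (t.1.1, t.2))), fun ω hω => Prod.ext rfl (Prod.ext rfl (hf ω hω))⟩
      ⟨fun t => (t.1, t.2.1), fun _ _ => rfl⟩
  have hYZW : ent p (fun ω => (Y ω, (Z ω, W ω))) = ent p (fun ω => ((W ω, Y ω), Z ω)) :=
    ent_eq_of_isFunctionOf ⟨fun t => (t.1.2, (t.2, t.1.1)), fun _ _ => rfl⟩
      ⟨fun t => ((t.2.2, t.1), t.2.1), fun _ _ => rfl⟩
  simp only [CMI, condEnt, hXZW, hXYZW, hYZW, ent_prod_comm Z W] at hm ⊢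
  linarith

end MutualInformation

/-- Lemma 1: if each `x_i` is a deterministic function of `(x_0, e^{i-1})`
and the Markov chain `x_0 - (e^{i-1}, x^i) - e_i` holds, then `I(x_0; e^n) = I(x^n → e^n)`. -/
theorem lemma1_feedback_identity {Ω M A B : Type*} [Fintype Ω] [Fintype M] [DecidableEq M]
    [Fintype A] [DecidableEq A] [Fintype B] [DecidableEq B] {n : ℕ} (p : Ω → ℝ)
    (hp : ∀ ω, 0 ≤ p ω) (hp1 : ∑ ω, p ω = 1)
    (x0 : Ω → M) (x : Fin n → Ω → A) (e : Fin n → Ω → B)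
    (hdet : ∀ i : Fin n, condEnt p (x i) (fun ω => (x0 ω, pre e i.1 i.isLt.le ω)) = 0)
    (hmarkov : ∀ i : Fin n,
      CMI p x0 (e i) (fun ω => (pre e i.1 i.isLt.le ω, pre x (i.1+1) i.isLt ω)) = 0) :
    MI p x0 (fun ω i => e i ω) = DI p x e := by
  have hΩ : Nonempty Ω := by
    by_contra h
    simp [not_nonempty_iff.1 h] at hp1
  rw [MI_eq_sum_CMI hp1, DI]
  refine Finset.sum_congr rfl fun i _ => CMI_eq_CMI_of_markov ?_ (hmarkov i)
  have : Nonempty A := hΩ.map (x i)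
  -- the entry `x j` of `pre x (i+1)` is a function of `(x0, pre e j)`, hence of `(x0, pre e i)`
  exact IsFunctionOf.pi fun j => (isFunctionOf_of_condEnt_eq_zero hp (hdet _)).trans
    ⟨fun t => (t.1, fun k => t.2 (Fin.castLE (Nat.lt_succ_iff.mp j.isLt) k)), fun _ _ => rfl⟩
end

section
/- Theorem 3 (decomposition of information flow through the encoder): Suppose random variables x^n, y^{n-1}, e^{n-1} satisfy, for each i, H(x_i | x^{i-1}, e^{i-1}) = H(x_i | x^{i-1}, e^{i-1}, y^{i-1}), i.e., I(x_i; y^{i-1} | x^{i-1}, e^{i-1}) = 0. Then I(e^{n-1} → x^n) = I(y^{n-1} → x^n) + I(e^{n-1} → x^n || y^{n-1}), where I(e^{n-1} → x^n) := Σ_{i=1}^n I(e^{i-1}; x_i | x^{i-1}), I(y^{n-1} → x^n) := Σ_{i=1}^n I(y^{i-1}; x_i | x^{i-1}), and the causally conditioned directed information I(e^{n-1} → x^n || y^{n-1}) := Σ_{i=1}^n I(e^{i-1}; x_i | x^{i-1}, y^{i-1}). -/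
open scoped BigOperators

lemma cmi_decomp_key {Ω A B C D : Type*} [Fintype Ω] [Fintype A] [DecidableEq A]
    [Fintype B] [DecidableEq B] [Fintype C] [DecidableEq C]
    [Fintype D] [DecidableEq D] (p : Ω → ℝ)
    (E : Ω → C) (X : Ω → A) (Y : Ω → B) (ξ : Ω → D)
    (h : CMI p ξ Y (fun ω => (X ω, E ω)) = 0) :
    CMI p E ξ X = CMI p Y ξ X + CMI p E ξ (fun ω => (X ω, Y ω)) := by
  have h1 : ent p (fun ω => (E ω, X ω)) = ent p (fun ω => (X ω, E ω)) := by
    exact ent_comp_inj p (fun ω => (X ω, E ω)) (fun q => (q.2, q.1))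
      (fun a b hab => by simp_all [Prod.ext_iff])
  have h2 : ent p (fun ω => ((E ω, ξ ω), X ω)) = ent p (fun ω => (ξ ω, (X ω, E ω))) := by
    exact ent_comp_inj p (fun ω => (ξ ω, (X ω, E ω))) (fun q => ((q.2.2, q.1), q.2.1))
      (fun a b hab => by simp_all [Prod.ext_iff])
  have h3 : ent p (fun ω => (Y ω, X ω)) = ent p (fun ω => (X ω, Y ω)) := by
    exact ent_comp_inj p (fun ω => (X ω, Y ω)) (fun q => (q.2, q.1))
      (fun a b hab => by simp_all [Prod.ext_iff])
  have h4 : ent p (fun ω => ((Y ω, ξ ω), X ω)) = ent p (fun ω => (ξ ω, (X ω, Y ω))) := by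
    exact ent_comp_inj p (fun ω => (ξ ω, (X ω, Y ω))) (fun q => ((q.2.2, q.1), q.2.1))
      (fun a b hab => by simp_all [Prod.ext_iff])
  have h5 : ent p (fun ω => (E ω, (X ω, Y ω))) = ent p (fun ω => (Y ω, (X ω, E ω))) := by
    exact ent_comp_inj p (fun ω => (Y ω, (X ω, E ω))) (fun q => (q.2.2, (q.2.1, q.1)))
      (fun a b hab => by simp_all [Prod.ext_iff])
  have h6 : ent p (fun ω => ((E ω, ξ ω), (X ω, Y ω)))
      = ent p (fun ω => ((ξ ω, Y ω), (X ω, E ω))) := by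
    exact ent_comp_inj p (fun ω => ((ξ ω, Y ω), (X ω, E ω)))
      (fun q => ((q.2.2, q.1.1), (q.2.1, q.1.2)))
      (fun a b hab => by simp_all [Prod.ext_iff])
  unfold CMI condEnt at h ⊢
  linarith [h1, h2, h3, h4, h5, h6, h]

/-- Theorem 3: decomposition of the information flow through the encoder,
`I(e^{n-1} → x^n) = I(y^{n-1} → x^n) + I(e^{n-1} → x^n || y^{n-1})`, with `n = m+1`. -/
theorem encoder_flow_decomposition {Ω A B C : Type*} [Fintype Ω]
    [Fintype A] [DecidableEq A] [Fintype B] [DecidableEq B]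
    [Fintype C] [DecidableEq C] {m : ℕ} (p : Ω → ℝ)
    (hp : ∀ ω, 0 ≤ p ω) (hp1 : ∑ ω, p ω = 1)
    (x : Fin (m+1) → Ω → A) (y : Fin m → Ω → B) (e : Fin m → Ω → C)
    (hcond : ∀ i : Fin (m+1),
      CMI p (x i) (pre y i.1 (Nat.lt_succ_iff.mp i.isLt))
        (fun ω => (pre x i.1 i.isLt.le ω, pre e i.1 (Nat.lt_succ_iff.mp i.isLt) ω)) = 0) :
    (∑ i : Fin (m+1), CMI p (pre e i.1 (Nat.lt_succ_iff.mp i.isLt)) (x i)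
        (pre x i.1 i.isLt.le)) =
    (∑ i : Fin (m+1), CMI p (pre y i.1 (Nat.lt_succ_iff.mp i.isLt)) (x i)
        (pre x i.1 i.isLt.le)) +
    (∑ i : Fin (m+1), CMI p (pre e i.1 (Nat.lt_succ_iff.mp i.isLt)) (x i)
        (fun ω => (pre x i.1 i.isLt.le ω, pre y i.1 (Nat.lt_succ_iff.mp i.isLt) ω))) := by
  rw [← Finset.sum_add_distrib]
  refine Finset.sum_congr rfl fun i _ => ?_
  exact cmi_decomp_key p (pre e i.1 (Nat.lt_succ_iff.mp i.isLt)) (pre x i.1 i.isLt.le)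
    (pre y i.1 (Nat.lt_succ_iff.mp i.isLt)) (x i) (hcond i)
end
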